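/- (Lemma 4 of the paper, claim (19).) For all integers s ≥ 1 and u with 0 ≤ u < pow_s, every coefficient of the high part χ(s,u+1)_H := Σ_{i > ts+(u+1)(k−1)} coeff(χ(s,u+1), X^i)·X^i belongs to the subspace I_{s+1}; equivalently, for every degree i > ts + (u+1)(k−1), the coefficient of X^i in χ(s,u+1) lies in I_{s+1}. -/

import Mathlib

open Polynomial

noncomputable def Lam (F : Type*) [CommRing F] (t k : ℕ) :
    Polynomial (MvPolynomial (Fin t ⊕ Fin k) F) :=
  X ^ t + ∑ j : Fin t, C (MvPolynomial.X (Sum.inl j)) * X ^ (j : ℕ)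

noncomputable def Pp (F : Type*) [CommRing F] (t k : ℕ) :
    Polynomial (MvPolynomial (Fin t ⊕ Fin k) F) :=
  ∑ i : Fin k, C (MvPolynomial.X (Sum.inr i)) * X ^ (i : ℕ)

noncomputable def liftP (F : Type*) [CommRing F] (t k : ℕ) (f : Polynomial F) :
    Polynomial (MvPolynomial (Fin t ⊕ Fin k) F) :=
  f.map MvPolynomial.C

/-- `Ω`, the negated quotient in the division of `Λ·R` by the monic polynomial `G`. -/
noncomputable def Om (F : Type*) [Field F] (t k : ℕ) (R G : Polynomial F) :
    Polynomial (MvPolynomial (Fin t ⊕ Fin k) F) :=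
  -((Lam F t k * liftP F t k R) /ₘ liftP F t k G)

/-- `χ(s,u) := Λ^{s−u}·(Λ·R + Ω·G)^u` if `u < s`, and
`χ(s,u) := (Σ_{i=0}^{s−1} binom(u,i) Λ^{s−i} R^{u−i} Ω^i G^i) mod G^s` if `u ≥ s`. -/
noncomputable def chi (F : Type*) [Field F] (t k : ℕ) (R G : Polynomial F) (s u : ℕ) :
    Polynomial (MvPolynomial (Fin t ⊕ Fin k) F) :=
  if u < s then
    Lam F t k ^ (s - u) * (Lam F t k * liftP F t k R + Om F t k R G * liftP F t k G) ^ u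
  else
    (∑ i ∈ Finset.range s, u.choose i •
      (Lam F t k ^ (s - i) * liftP F t k R ^ (u - i) * Om F t k R G ^ i * liftP F t k G ^ i))
      %ₘ liftP F t k G ^ s

/-- `ID F t k R G D` is the smallest `F`-linear subspace of
`A = F[λ₀,…,λ_{t−1},p₀,…,p_{k−1}]` containing all coefficients of
`Λ·P − (Λ·R mod G)` and closed under multiplication by any monomial `m`
whenever the total degree of the product is at most `D`. -/
noncomputable def ID (F : Type*) [Field F] (t k : ℕ) (R G : Polynomial F) (D : ℕ) :
    Submodule F (MvPolynomial (Fin t ⊕ Fin k) F) :=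
  sInf {W : Submodule F (MvPolynomial (Fin t ⊕ Fin k) F) |
    (Set.range (Lam F t k * Pp F t k - (Lam F t k * liftP F t k R) %ₘ liftP F t k G).coeff) ⊆ W ∧
    ∀ f ∈ W, ∀ d : (Fin t ⊕ Fin k) →₀ ℕ,
      ((MvPolynomial.monomial d (1 : F)) * f).totalDegree ≤ D →
      (MvPolynomial.monomial d (1 : F)) * f ∈ W}

/-!
Write `M = Λ·R mod G = Λ·R + Ω·G` and `E = Λ·P − M`; the coefficients of `E` generate
`I_D`. The sum defining `χ(s,u)` is `Λ·T(s,u)` for a cofactor `T(s,u)` whose coefficients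
have total degree at most `s − 1`, and Pascal's rule gives `M·T(s,u) ≡ Λ·T(s,u+1)` modulo
`G^s`, with equality when `u + 1 < s`. Substituting `M = Λ·P − E` yields
`χ(s,u+1) ≡ P·χ(s,u) − E·T(s,u) (mod G^s)`.
Now induct on `u`, starting from `deg Λ^s ≤ ts`. The coefficients of `χ(s,u)` have total
degree at most `s` and `P` has `X`-degree below `k`, so the coefficients of `P·χ(s,u)` beyond
`ts + (u+1)(k−1)` are sums of `P`-coefficients (of degree one) times coefficients of `χ(s,u)`
beyond `ts + u(k−1)`, while every coefficient of `E·T(s,u)` is a polynomial combination of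
`E`-coefficients in total degree `≤ s + 1`. Reducing modulo the monic `G^s ∈ F[X]` combines
coefficients `F`-linearly and never moves a coefficient to a higher power of `X`, so it
preserves membership of the high coefficients in `I_{s+1}`.
-/

theorem Polynomial.coeff_modByMonic_map_mem {K A : Type*} [CommRing K] [CommRing A] [Algebra K A]
    {W : Submodule K A} {g : K[X]} (hg : g.Monic) {f : A[X]} {N : ℕ}
    (hf : ∀ j, N ≤ j → f.coeff j ∈ W) {i : ℕ} (hi : N ≤ i) :
    (f %ₘ g.map (algebraMap K A)).coeff i ∈ W := by
  have hsum : f %ₘ g.map (algebraMap K A) =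
      ∑ j ∈ f.support, f.coeff j • (X ^ j %ₘ g).map (algebraMap K A) := by
    conv_lhs => rw [f.as_sum_support]
    rw [← modByMonicHom_apply, map_sum]
    refine Finset.sum_congr rfl fun j _ => ?_
    rw [modByMonicHom_apply, ← smul_X_eq_monomial, smul_modByMonic,
      map_modByMonic _ hg, Polynomial.map_pow, map_X]
  rw [hsum, finsetSum_coeff]
  refine Submodule.sum_mem _ fun j _ => ?_
  rw [coeff_smul, coeff_map, smul_eq_mul, mul_comm, ← Algebra.smul_def]
  by_cases hj : N ≤ j
  · exact W.smul_mem _ (hf j hj)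
  · have hdeg : (X ^ j %ₘ g).natDegree < i :=
      (natDegree_modByMonic_le_left.trans (natDegree_X_pow_le j)).trans_lt (by omega)
    rw [coeff_eq_zero_of_natDegree_lt hdeg, zero_smul]
    exact W.zero_mem

section CoeffTotalDegree

variable (σ R : Type*) [CommRing R]

def coeffTotalDegreeLE (d : ℕ) : Submodule R (MvPolynomial σ R)[X] where
  carrier := {p | ∀ i, (p.coeff i).totalDegree ≤ d}
  add_mem' hp hq i := (MvPolynomial.totalDegree_add _ _).trans (max_le (hp i) (hq i))
  zero_mem' _ := by simp
  smul_mem' c _ hp i := (MvPolynomial.totalDegree_smul_le c _).trans (hp i)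

variable {σ R} {d e : ℕ} {p q : (MvPolynomial σ R)[X]}

theorem coeffTotalDegreeLE_mono (h : d ≤ e) :
    coeffTotalDegreeLE σ R d ≤ coeffTotalDegreeLE σ R e :=
  fun _ hp i => (hp i).trans h

theorem mul_mem_coeffTotalDegreeLE (hp : p ∈ coeffTotalDegreeLE σ R d)
    (hq : q ∈ coeffTotalDegreeLE σ R e) : p * q ∈ coeffTotalDegreeLE σ R (d + e) :=
  fun i => by
  rw [coeff_mul]
  exact MvPolynomial.totalDegree_finsetSum _ _ |>.trans <| Finset.sup_le fun x _ =>
    (MvPolynomial.totalDegree_mul _ _).trans (add_le_add (hp x.1) (hq x.2))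

theorem pow_mem_coeffTotalDegreeLE (hp : p ∈ coeffTotalDegreeLE σ R d) (n : ℕ) :
    p ^ n ∈ coeffTotalDegreeLE σ R (n * d) := by
  induction n with
  | zero => intro i; rw [pow_zero, coeff_one]; split <;> simp
  | succ n ih => simpa [pow_succ, add_mul] using mul_mem_coeffTotalDegreeLE ih hp

theorem C_mem_coeffTotalDegreeLE {a : MvPolynomial σ R} (ha : a.totalDegree ≤ d) :
    C a ∈ coeffTotalDegreeLE σ R d := fun i => by
  rw [coeff_C]; split
  · exact ha
  · simp

theorem X_pow_mem_coeffTotalDegreeLE (n : ℕ) :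
    (X ^ n : (MvPolynomial σ R)[X]) ∈ coeffTotalDegreeLE σ R d :=
  fun i => by rw [coeff_X_pow]; split <;> simp

theorem map_C_mem_coeffTotalDegreeLE (f : R[X]) :
    f.map MvPolynomial.C ∈ coeffTotalDegreeLE σ R d :=
  fun i => by simp

theorem modByMonic_map_C_mem_coeffTotalDegreeLE (hp : p ∈ coeffTotalDegreeLE σ R d) {g : R[X]}
    (hg : g.Monic) : p %ₘ g.map MvPolynomial.C ∈ coeffTotalDegreeLE σ R d := fun i => by
  rw [← MvPolynomial.algebraMap_eq, ← MvPolynomial.mem_restrictTotalDegree]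
  exact coeff_modByMonic_map_mem hg (N := 0)
    (fun j _ => (MvPolynomial.mem_restrictTotalDegree σ _ _).2 (hp j)) i.zero_le

end CoeffTotalDegree

section BinomTrunc

variable {A : Type*} [CommSemiring A] (z x y : A)

/-- `z * binomTrunc z x y m u` is the binomial expansion of `z ^ (m - u) * (z * x + y) ^ u`
truncated to the terms with `y ^ i`, `i < m`; it makes sense also for `u ≥ m`. -/
def binomTrunc (m u : ℕ) : A :=
  ∑ i ∈ Finset.range m, u.choose i • (z ^ (m - 1 - i) * x ^ (u - i) * y ^ i)

theorem mul_binomTrunc (m u : ℕ) :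
    z * binomTrunc z x y m u =
      ∑ i ∈ Finset.range m, u.choose i • (z ^ (m - i) * x ^ (u - i) * y ^ i) := by
  rw [binomTrunc, Finset.mul_sum]
  refine Finset.sum_congr rfl fun i hi => ?_
  rw [mul_smul_comm, show m - i = m - 1 - i + 1 by grind]
  ring_nf

theorem mul_binomTrunc_of_lt {m u : ℕ} (h : u < m) :
    z * binomTrunc z x y m u = z ^ (m - u) * (z * x + y) ^ u := by
  rw [mul_binomTrunc, add_comm, add_pow, Finset.mul_sum,
    ← Finset.sum_subset (Finset.range_subset_range.2 h) fun i _ hi => by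
      rw [Nat.choose_eq_zero_of_lt (by simpa using hi), zero_smul]]
  refine Finset.sum_congr rfl fun i hi => ?_
  have hiu : i ≤ u := Nat.lt_succ_iff.1 (Finset.mem_range.1 hi)
  rw [nsmul_eq_mul, show m - i = m - u + (u - i) by omega]
  ring

theorem binomTrunc_succ (m u : ℕ) :
    binomTrunc z x y (m + 2) u =
      z * binomTrunc z x y (m + 1) u + u.choose (m + 1) • (x ^ (u - (m + 1)) * y ^ (m + 1)) := by
  rw [binomTrunc, Finset.sum_range_succ, binomTrunc, Finset.mul_sum]
  congr 1
  · refine Finset.sum_congr rfl fun i hi => ?_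
    rw [mul_smul_comm, show m + 2 - 1 - i = m + 1 - 1 - i + 1 by grind]
    ring_nf
  · simp

theorem add_mul_binomTrunc (m u : ℕ) :
    (z * x + y) * binomTrunc z x y (m + 1) u =
      z * binomTrunc z x y (m + 1) (u + 1) + u.choose m • (x ^ (u - m) * y ^ (m + 1)) := by
  induction m with
  | zero => simp [binomTrunc]; ring
  | succ m ih =>
    simp only [nsmul_eq_mul] at ih ⊢
    have hx : (u.choose (m + 1) : A) * (x * x ^ (u - (m + 1))) =
        u.choose (m + 1) * x ^ (u - m) := by
      rcases Nat.lt_or_ge m u with h | h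
      · rw [← pow_succ', show u - (m + 1) + 1 = u - m by omega]
      · rw [Nat.choose_eq_zero_of_lt (by omega), Nat.cast_zero, zero_mul, zero_mul]
    rw [binomTrunc_succ, binomTrunc_succ, Nat.choose_succ_succ',
      show u + 1 - (m + 1) = u - m by omega]
    simp only [nsmul_eq_mul, Nat.cast_add]
    calc (z * x + y) * (z * binomTrunc z x y (m + 1) u
            + u.choose (m + 1) * (x ^ (u - (m + 1)) * y ^ (m + 1)))
        = z * ((z * x + y) * binomTrunc z x y (m + 1) u)
            + z * (u.choose (m + 1) * (x * x ^ (u - (m + 1)))) * y ^ (m + 1)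
            + u.choose (m + 1) * (x ^ (u - (m + 1)) * y ^ (m + 1 + 1)) := by ring
      _ = _ := by rw [ih, hx]; ring

end BinomTrunc

section Chi

variable {F : Type*} [Field F] {t k : ℕ} {R G : F[X]}

noncomputable def keyPoly (F : Type*) [Field F] (t k : ℕ) (R G : F[X]) :
    (MvPolynomial (Fin t ⊕ Fin k) F)[X] :=
  Lam F t k * Pp F t k - (Lam F t k * liftP F t k R) %ₘ liftP F t k G

noncomputable def chiCofactor (F : Type*) [Field F] (t k : ℕ) (R G : F[X]) (s u : ℕ) :
    (MvPolynomial (Fin t ⊕ Fin k) F)[X] :=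
  binomTrunc (Lam F t k) (liftP F t k R) (Om F t k R G * liftP F t k G) s u

theorem Lam_mul_liftP_add_Om_mul_liftP :
    Lam F t k * liftP F t k R + Om F t k R G * liftP F t k G =
      (Lam F t k * liftP F t k R) %ₘ liftP F t k G := by
  rw [Om]
  linear_combination -modByMonic_add_div (Lam F t k * liftP F t k R) (liftP F t k G)

theorem chi_of_lt {s u : ℕ} (h : u < s) :
    chi F t k R G s u = Lam F t k * chiCofactor F t k R G s u := by
  rw [chi, if_pos h, chiCofactor, mul_binomTrunc_of_lt _ _ _ h]

theorem chi_of_le {s u : ℕ} (h : s ≤ u) :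
    chi F t k R G s u = (Lam F t k * chiCofactor F t k R G s u) %ₘ liftP F t k G ^ s := by
  rw [chi, if_neg (not_lt.2 h), chiCofactor, mul_binomTrunc]
  simp only [mul_pow, mul_assoc]

theorem dvd_Lam_mul_chiCofactor_sub_chi (s u : ℕ) :
    liftP F t k G ^ s ∣ Lam F t k * chiCofactor F t k R G s u - chi F t k R G s u := by
  rcases lt_or_ge u s with h | h
  · rw [chi_of_lt h, sub_self]
    exact dvd_zero _
  · rw [chi_of_le h]
    exact ⟨_, (eq_sub_of_add_eq' (modByMonic_add_div _ _)).symm⟩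

theorem Lam_mul_chiCofactor_succ (s u : ℕ) :
    Lam F t k * chiCofactor F t k R G (s + 1) (u + 1) =
      Pp F t k * (Lam F t k * chiCofactor F t k R G (s + 1) u)
        - keyPoly F t k R G * chiCofactor F t k R G (s + 1) u
        - u.choose s • (liftP F t k R ^ (u - s) * (Om F t k R G * liftP F t k G) ^ (s + 1)) := by
  have h := add_mul_binomTrunc (Lam F t k) (liftP F t k R) (Om F t k R G * liftP F t k G) s u
  rw [Lam_mul_liftP_add_Om_mul_liftP] at h
  rw [keyPoly, chiCofactor, chiCofactor]
  linear_combination -h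

theorem chi_succ_of_lt {s u : ℕ} (h : u + 1 < s) :
    chi F t k R G s (u + 1) =
      Pp F t k * chi F t k R G s u - keyPoly F t k R G * chiCofactor F t k R G s u := by
  obtain ⟨s, rfl⟩ : ∃ s', s = s' + 1 := ⟨s - 1, by omega⟩
  rw [chi_of_lt h, Lam_mul_chiCofactor_succ, chi_of_lt (by omega : u < s + 1),
    Nat.choose_eq_zero_of_lt (by omega : u < s), zero_smul, sub_zero]

theorem chi_succ_of_le (hG : G.Monic) {s u : ℕ} (hs : 1 ≤ s) (h : s ≤ u + 1) :
    chi F t k R G s (u + 1) =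
      (Pp F t k * chi F t k R G s u - keyPoly F t k R G * chiCofactor F t k R G s u)
        %ₘ liftP F t k G ^ s := by
  obtain ⟨s, rfl⟩ : ∃ s', s = s' + 1 := ⟨s - 1, by omega⟩
  rw [chi_of_le h]
  refine modByMonic_eq_of_dvd_sub ((hG.map MvPolynomial.C).pow _) ?_
  rw [Lam_mul_chiCofactor_succ, mul_pow]
  convert dvd_sub (dvd_mul_of_dvd_right (dvd_Lam_mul_chiCofactor_sub_chi (s + 1) u) (Pp F t k))
    (dvd_mul_left (liftP F t k G ^ (s + 1))
      (u.choose s • (liftP F t k R ^ (u - s) * Om F t k R G ^ (s + 1)))) using 1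
  ring

theorem natDegree_Lam_le : (Lam F t k).natDegree ≤ t := by
  rw [Lam]
  refine natDegree_add_le_of_degree_le (natDegree_X_pow_le t) ?_
  refine natDegree_sum_le_of_forall_le _ _ fun j _ => ?_
  exact (natDegree_C_mul_le _ _).trans ((natDegree_X_pow_le _).trans j.2.le)

theorem Pp_coeff_eq_zero {i : ℕ} (hi : k ≤ i) : (Pp F t k).coeff i = 0 := by
  rw [Pp, finsetSum_coeff]
  exact Finset.sum_eq_zero fun j _ => by
    rw [coeff_C_mul, coeff_X_pow, if_neg (by omega), mul_zero]

theorem Lam_mem_coeffTotalDegreeLE : Lam F t k ∈ coeffTotalDegreeLE (Fin t ⊕ Fin k) F 1 := by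
  refine add_mem (X_pow_mem_coeffTotalDegreeLE t) (sum_mem fun j _ => ?_)
  simpa using mul_mem_coeffTotalDegreeLE
    (C_mem_coeffTotalDegreeLE (MvPolynomial.totalDegree_X (R := F) (Sum.inl j)).le)
    (X_pow_mem_coeffTotalDegreeLE (d := 0) (j : ℕ))

theorem Pp_mem_coeffTotalDegreeLE : Pp F t k ∈ coeffTotalDegreeLE (Fin t ⊕ Fin k) F 1 := by
  refine sum_mem fun j _ => ?_
  simpa using mul_mem_coeffTotalDegreeLE
    (C_mem_coeffTotalDegreeLE (MvPolynomial.totalDegree_X (R := F) (Sum.inr j)).le)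
    (X_pow_mem_coeffTotalDegreeLE (d := 0) (j : ℕ))

theorem Lam_mul_liftP_mem_coeffTotalDegreeLE (f : F[X]) :
    Lam F t k * liftP F t k f ∈ coeffTotalDegreeLE (Fin t ⊕ Fin k) F 1 :=
  mul_mem_coeffTotalDegreeLE Lam_mem_coeffTotalDegreeLE (map_C_mem_coeffTotalDegreeLE (d := 0) f)

theorem modByMonic_mem_coeffTotalDegreeLE (hG : G.Monic) :
    (Lam F t k * liftP F t k R) %ₘ liftP F t k G ∈ coeffTotalDegreeLE (Fin t ⊕ Fin k) F 1 :=
  modByMonic_map_C_mem_coeffTotalDegreeLE (Lam_mul_liftP_mem_coeffTotalDegreeLE R) hG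

theorem keyPoly_mem_coeffTotalDegreeLE (hG : G.Monic) :
    keyPoly F t k R G ∈ coeffTotalDegreeLE (Fin t ⊕ Fin k) F 2 :=
  sub_mem (mul_mem_coeffTotalDegreeLE Lam_mem_coeffTotalDegreeLE Pp_mem_coeffTotalDegreeLE)
    (coeffTotalDegreeLE_mono one_le_two (modByMonic_mem_coeffTotalDegreeLE hG))

theorem chiCofactor_mem_coeffTotalDegreeLE (hG : G.Monic) (s u : ℕ) :
    chiCofactor F t k R G s u ∈ coeffTotalDegreeLE (Fin t ⊕ Fin k) F (s - 1) := by
  have hOmG : Om F t k R G * liftP F t k G ∈ coeffTotalDegreeLE (Fin t ⊕ Fin k) F 1 := by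
    rw [eq_sub_of_add_eq' Lam_mul_liftP_add_Om_mul_liftP]
    exact sub_mem (modByMonic_mem_coeffTotalDegreeLE hG) (Lam_mul_liftP_mem_coeffTotalDegreeLE R)
  rw [chiCofactor, binomTrunc]
  refine sum_mem fun i hi => nsmul_mem ?_ _
  refine coeffTotalDegreeLE_mono ?_ <| mul_mem_coeffTotalDegreeLE
    (mul_mem_coeffTotalDegreeLE (pow_mem_coeffTotalDegreeLE Lam_mem_coeffTotalDegreeLE _)
      (pow_mem_coeffTotalDegreeLE (map_C_mem_coeffTotalDegreeLE (d := 0) R) _))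
    (pow_mem_coeffTotalDegreeLE hOmG i)
  grind

theorem chi_mem_coeffTotalDegreeLE (hG : G.Monic) {s : ℕ} (hs : 1 ≤ s) (u : ℕ) :
    chi F t k R G s u ∈ coeffTotalDegreeLE (Fin t ⊕ Fin k) F s := by
  have hLT : Lam F t k * chiCofactor F t k R G s u ∈ coeffTotalDegreeLE (Fin t ⊕ Fin k) F s :=
    coeffTotalDegreeLE_mono (by omega) <|
      mul_mem_coeffTotalDegreeLE Lam_mem_coeffTotalDegreeLE
        (chiCofactor_mem_coeffTotalDegreeLE hG s u)
  rcases lt_or_ge u s with h | h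
  · rwa [chi_of_lt h]
  · rw [chi_of_le h, liftP, ← Polynomial.map_pow]
    exact modByMonic_map_C_mem_coeffTotalDegreeLE hLT (hG.pow s)

end Chi

section DecodingSpace

variable {F : Type*} [Field F] {t k : ℕ} {R G : F[X]} {D : ℕ}

theorem keyPoly_coeff_mem_ID (j : ℕ) : (keyPoly F t k R G).coeff j ∈ ID F t k R G D :=
  Submodule.mem_sInf.2 fun _ hW => hW.1 ⟨j, rfl⟩

theorem monomial_one_mul_mem_ID {f : MvPolynomial (Fin t ⊕ Fin k) F} (hf : f ∈ ID F t k R G D)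
    (d : Fin t ⊕ Fin k →₀ ℕ)
    (hd : (MvPolynomial.monomial d (1 : F) * f).totalDegree ≤ D) :
    MvPolynomial.monomial d (1 : F) * f ∈ ID F t k R G D :=
  Submodule.mem_sInf.2 fun W hW => hW.2 f (Submodule.mem_sInf.1 hf W hW) d hd

theorem mul_mem_ID {e x : MvPolynomial (Fin t ⊕ Fin k) F} (he : e ∈ ID F t k R G D)
    (hdeg : x.totalDegree + e.totalDegree ≤ D) : x * e ∈ ID F t k R G D := by
  rw [x.as_sum, Finset.sum_mul]
  refine sum_mem fun v hv => ?_
  rw [show MvPolynomial.monomial v (x.coeff v) = x.coeff v • MvPolynomial.monomial v (1 : F) by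
    rw [MvPolynomial.smul_monomial, smul_eq_mul, mul_one], smul_mul_assoc]
  refine Submodule.smul_mem _ _ (monomial_one_mul_mem_ID he v ?_)
  calc (MvPolynomial.monomial v (1 : F) * e).totalDegree
      ≤ (MvPolynomial.monomial v (1 : F)).totalDegree + e.totalDegree :=
        MvPolynomial.totalDegree_mul _ _
    _ ≤ x.totalDegree + e.totalDegree := by
        gcongr
        exact (MvPolynomial.totalDegree_monomial_le _ _).trans (MvPolynomial.le_totalDegree hv)
    _ ≤ D := hdeg

theorem coeff_Pp_mul_mem_ID {d N i : ℕ} {f : (MvPolynomial (Fin t ⊕ Fin k) F)[X]}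
    (hf : f ∈ coeffTotalDegreeLE (Fin t ⊕ Fin k) F d)
    (hhigh : ∀ j, N < j → f.coeff j ∈ ID F t k R G (d + 1)) (hi : N + (k - 1) < i) :
    (Pp F t k * f).coeff i ∈ ID F t k R G (d + 1) := by
  rw [coeff_mul]
  refine sum_mem fun x hx => ?_
  rw [Finset.HasAntidiagonal.mem_antidiagonal] at hx
  by_cases hN : N < x.2
  · exact mul_mem_ID (hhigh x.2 hN)
      (by linarith [Pp_mem_coeffTotalDegreeLE (F := F) (t := t) (k := k) x.1, hf x.2])
  · rw [Pp_coeff_eq_zero (by omega), zero_mul]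
    exact zero_mem _

theorem coeff_keyPoly_mul_mem_ID (hG : G.Monic) {d : ℕ}
    {g : (MvPolynomial (Fin t ⊕ Fin k) F)[X]}
    (hg : g ∈ coeffTotalDegreeLE (Fin t ⊕ Fin k) F d) (i : ℕ) :
    (keyPoly F t k R G * g).coeff i ∈ ID F t k R G (d + 2) := by
  rw [coeff_mul]
  refine sum_mem fun x _ => ?_
  rw [mul_comm]
  exact mul_mem_ID (keyPoly_coeff_mem_ID x.1)
    (by linarith [keyPoly_mem_coeffTotalDegreeLE (R := R) (t := t) (k := k) hG x.1, hg x.2])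

theorem coeff_chi_mem_ID (hG : G.Monic) {s : ℕ} (hs : 1 ≤ s) (u : ℕ) {i : ℕ}
    (hi : t * s + u * (k - 1) < i) : (chi F t k R G s u).coeff i ∈ ID F t k R G (s + 1) := by
  induction u generalizing i with
  | zero =>
    rw [chi, if_pos (Nat.lt_of_succ_le hs), Nat.sub_zero, pow_zero, mul_one,
      coeff_eq_zero_of_natDegree_lt
        ((natDegree_pow_le_of_le s natDegree_Lam_le).trans_lt (by linarith))]
    exact zero_mem _
  | succ u ih =>
    have hrec : ∀ j, t * s + (u + 1) * (k - 1) < j →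
        (Pp F t k * chi F t k R G s u - keyPoly F t k R G * chiCofactor F t k R G s u).coeff j
          ∈ ID F t k R G (s + 1) := fun j hj => by
      rw [coeff_sub]
      refine sub_mem (coeff_Pp_mul_mem_ID (N := t * s + u * (k - 1))
        (chi_mem_coeffTotalDegreeLE hG hs u) (fun _ => ih) (by linarith)) ?_
      convert coeff_keyPoly_mul_mem_ID hG (chiCofactor_mem_coeffTotalDegreeLE hG s u) j using 2
      omega
    rcases lt_or_ge (u + 1) s with h | h
    · rw [chi_succ_of_lt h]
      exact hrec i hi
    · rw [chi_succ_of_le hG hs h, liftP, ← Polynomial.map_pow, ← MvPolynomial.algebraMap_eq]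
      exact coeff_modByMonic_map_mem (hG.pow s) hrec hi

end DecodingSpace

theorem stmt13_general (F : Type*) [Field F] (n t k : ℕ)
    (a : Fin n → F)
    (G : Polynomial F) (hG : G = ∏ ℓ : Fin n, (X - C (a ℓ)))
    (R : Polynomial F) :
    ∀ s u : ℕ, 1 ≤ s → s * t + (u + 1) * (k - 1) ≤ s * n - 1 →
      ∀ i : ℕ, t * s + (u + 1) * (k - 1) < i →
        (chi F t k R G s (u + 1)).coeff i ∈ ID F t k R G (s + 1) := by
  intro s u hs _ i hi
  have hGm : G.Monic := hG ▸ monic_prod_of_monic _ _ fun ℓ _ => monic_X_sub_C (a ℓ)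
  exact coeff_chi_mem_ID hGm hs (u + 1) hi

/-- Lemma 4, claim (19): for `s ≥ 1` and `0 ≤ u < pow_s`
(the condition `u < pow_s`, where `pow_s = max{u : s·t + u·(k−1) ≤ s·n − 1}`, being
expressed equivalently as `s·t + (u+1)·(k−1) ≤ s·n − 1`), for every degree
`i > t·s + (u+1)·(k−1)` the coefficient of `X^i` in `χ(s,u+1)` lies in `I_{s+1}`. -/
theorem stmt13 (F : Type*) [Field F] (n t k : ℕ) (hn : 0 < n) (ht : 1 ≤ t) (hk : 2 ≤ k)
    (htk : t + k - 1 ≤ n - 1)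
    (a b : Fin n → F) (ha : Function.Injective a)
    (G : Polynomial F) (hG : G = ∏ ℓ : Fin n, (X - C (a ℓ)))
    (R : Polynomial F) (hRdeg : R.degree < n) (hR : ∀ ℓ, R.eval (a ℓ) = b ℓ) :
    ∀ s u : ℕ, 1 ≤ s → s * t + (u + 1) * (k - 1) ≤ s * n - 1 →
      ∀ i : ℕ, t * s + (u + 1) * (k - 1) < i →
        (chi F t k R G s (u + 1)).coeff i ∈ ID F t k R G (s + 1) :=
  stmt13_general F n t k a G hG R
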